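/- arXiv:2107.05189 — 10 statements merged into one kernel-verified Lean document; each statement's English description precedes it below -/
import Mathlib

section
/- Let σ be a tour satisfying the precedence constraints, let x ∈ {1, …, n}, and let τ be the tour obtained from σ by deleting the two entries x and n+x and then reinserting x immediately after some position i′ of the reduced sequence and n+x immediately after some position j′ with i′ ≤ j′ (with n+x placed immediately after x when i′ = j′). Then τ also satisfies the precedence constraints. -/
/-- A PDTSP tour on vertices `{0, …, 2n}`: positions `0` and `2n+1` hold the depot `0`,
and positions `{1, …, 2n}` are mapped bijectively onto the vertices `{1, …, 2n}`. -/
def IsTour (n : ℕ) (σ : ℕ → ℕ) : Prop :=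
  σ 0 = 0 ∧ σ (2 * n + 1) = 0 ∧ Set.BijOn σ (Set.Icc 1 (2 * n)) (Set.Icc 1 (2 * n))

/-- Precedence constraints: every pickup `x ∈ {1, …, n}` occurs at an earlier
position than its paired delivery `n + x`. -/
def SatisfiesPrec (n : ℕ) (σ : ℕ → ℕ) : Prop :=
  ∀ x i j, 1 ≤ x → x ≤ n → 1 ≤ i → i ≤ 2 * n → 1 ≤ j → j ≤ 2 * n →
    σ i = x → σ j = n + x → i < j

/-- The sequence obtained from `σ` by deleting the entries at positions `i < j`
and concatenating the remaining entries in order. -/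
def removePair (σ : ℕ → ℕ) (i j : ℕ) : ℕ → ℕ := fun k =>
  if k < i then σ k else if k < j - 1 then σ (k + 1) else σ (k + 2)

/-- The sequence obtained from `π` by inserting `x` immediately after position `i'`
and `y` immediately after position `j'` (with `y` placed immediately after `x`
when `i' = j'`), for `i' ≤ j'`. -/
def insertPair (π : ℕ → ℕ) (x y i' j' : ℕ) : ℕ → ℕ := fun k =>
  if k ≤ i' then π k
  else if k = i' + 1 then x
  else if k ≤ j' + 1 then π (k - 1)
  else if k = j' + 2 then y
  else π (k - 2)

/-- The position in the original tour corresponding to position `k` of the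
reduced tour. -/
def fmap (i j k : ℕ) : ℕ := if k < i then k else if k < j - 1 then k + 1 else k + 2

/-- The position in the reduced tour corresponding to position `p` of the new
tour (for `p` not one of the two inserted positions). -/
def gmap (i' j' p : ℕ) : ℕ := if p ≤ i' then p else if p ≤ j' + 1 then p - 1 else p - 2

lemma removePair_eq (σ : ℕ → ℕ) (i j k : ℕ) :
    removePair σ i j k = σ (fmap i j k) := by
  unfold removePair fmap
  split_ifs <;> rfl

lemma insertPair_eq (π : ℕ → ℕ) (x y i' j' p : ℕ) (h1 : p ≠ i' + 1) (h2 : p ≠ j' + 2) :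
    insertPair π x y i' j' p = π (gmap i' j' p) := by
  unfold insertPair gmap
  split_ifs <;> rfl

/-- Relocating a pickup-and-delivery pair preserves the precedence constraints:
if `σ` is a tour satisfying the precedence constraints, `x` and `n + x` occupy
positions `i < j` in `σ`, and `τ` is obtained from `σ` by deleting them and
reinserting `x` immediately after position `i'` of the reduced tour and `n + x`
immediately after position `j'` with `i' ≤ j'` (with `n + x` placed immediately
after `x` when `i' = j'`), then `τ` satisfies the precedence constraints. -/
theorem stmt_3 (n : ℕ) (hn : 1 ≤ n) (σ : ℕ → ℕ)
    (hσ : IsTour n σ) (hprec : SatisfiesPrec n σ)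
    (x i j : ℕ) (hx1 : 1 ≤ x) (hxn : x ≤ n)
    (hi : 1 ≤ i) (hij : i < j) (hj : j ≤ 2 * n)
    (hσi : σ i = x) (hσj : σ j = n + x)
    (i' j' : ℕ) (hij' : i' ≤ j') (hj' : j' ≤ 2 * n - 2) :
    SatisfiesPrec n (insertPair (removePair σ i j) x (n + x) i' j') := by
  obtain ⟨h0, h2n1, hbij⟩ := hσ
  have hinj := hbij.2.1
  -- properties of fmap
  have hf_ne : ∀ k, fmap i j k ≠ i ∧ fmap i j k ≠ j := by
    intro k; unfold fmap; split_ifs <;> omega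
  have hf_bd : ∀ k, 1 ≤ k → k ≤ 2 * n - 2 → 1 ≤ fmap i j k ∧ fmap i j k ≤ 2 * n := by
    intro k hk1 hk2; unfold fmap; split_ifs <;> omega
  have hf_lt : ∀ a b, fmap i j a < fmap i j b → a < b := by
    intro a b h; by_contra hc; unfold fmap at h; split_ifs at h <;> omega
  -- properties of gmap
  have hg_bd : ∀ p, 1 ≤ p → p ≤ 2 * n → p ≠ i' + 1 → p ≠ j' + 2 →
      1 ≤ gmap i' j' p ∧ gmap i' j' p ≤ 2 * n - 2 := by
    intro p h1 h2 h3 h4; unfold gmap; split_ifs <;> omega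
  have hg_lt : ∀ a b, gmap i' j' a < gmap i' j' b → a < b := by
    intro a b h; by_contra hc; unfold gmap at h; split_ifs at h <;> omega
  have hval : ∀ p, p ≠ i' + 1 → p ≠ j' + 2 →
      insertPair (removePair σ i j) x (n + x) i' j' p = σ (fmap i j (gmap i' j' p)) := by
    intro p h1 h2
    rw [insertPair_eq _ _ _ _ _ _ h1 h2, removePair_eq]
  have hvx : insertPair (removePair σ i j) x (n + x) i' j' (i' + 1) = x := by
    unfold insertPair
    rw [if_neg (by omega), if_pos rfl]
  have hvy : insertPair (removePair σ i j) x (n + x) i' j' (j' + 2) = n + x := by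
    unfold insertPair
    rw [if_neg (by omega), if_neg (by omega), if_neg (by omega), if_pos rfl]
  intro y p q hy1 hyn hp1 hp2 hq1 hq2 hτp hτq
  by_cases hq_i : q = i' + 1
  · exfalso
    rw [hq_i, hvx] at hτq
    omega
  by_cases hp_j : p = j' + 2
  · exfalso
    rw [hp_j, hvy] at hτp
    omega
  by_cases hp_i : p = i' + 1
  · -- p is the inserted pickup, so y = x
    rw [hp_i, hvx] at hτp
    by_cases hq_j : q = j' + 2
    · omega
    · exfalso
      rw [hval q hq_i hq_j] at hτq
      have hb := hg_bd q hq1 hq2 hq_i hq_j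
      have hb2 := hf_bd _ hb.1 hb.2
      have : fmap i j (gmap i' j' q) = j := by
        apply hinj (Set.mem_Icc.mpr hb2) (Set.mem_Icc.mpr ⟨by omega, hj⟩)
        rw [hτq, hσj, hτp]
      exact (hf_ne _).2 this
  · rw [hval p hp_i hp_j] at hτp
    have hbp := hg_bd p hp1 hp2 hp_i hp_j
    have hbp2 := hf_bd _ hbp.1 hbp.2
    by_cases hq_j : q = j' + 2
    · exfalso
      rw [hq_j, hvy] at hτq
      have hyx : y = x := by omega
      have : fmap i j (gmap i' j' p) = i := by
        apply hinj (Set.mem_Icc.mpr hbp2) (Set.mem_Icc.mpr ⟨hi, by omega⟩)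
        rw [hτp, hσi, hyx]
      exact (hf_ne _).1 this
    · rw [hval q hq_i hq_j] at hτq
      have hbq := hg_bd q hq1 hq2 hq_i hq_j
      have hbq2 := hf_bd _ hbq.1 hbq.2
      have := hprec y _ _ hy1 hyn hbp2.1 hbp2.2 hbq2.1 hbq2.2 hτp hτq
      exact hg_lt _ _ (hf_lt _ _ this)
end

section
/- Let c be symmetric (c(u,v) = c(v,u) for all vertices u, v), let σ be a tour, and let 0 ≤ i and i+2 ≤ j ≤ 2n+1. Let τ be the tour obtained from σ by the 2-Opt move at (i,j): τ(k) = σ(k) for k ≤ i or k ≥ j, and τ(k) = σ(i+j−k) for i < k < j (the subsequence σ_[i+1,j−1] is reversed). Then cost(τ) = cost(σ) + Δ_2opt(i,j), where Δ_2opt(i,j) = c(σ(i),σ(j−1)) + c(σ(i+1),σ(j)) − c(σ(i),σ(i+1)) − c(σ(j−1),σ(j)). -/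
/-- Cost of the vertex sequence `π(0), …, π(L)`: the sum of `c` over consecutive pairs. -/
def tourCost (c : ℕ → ℕ → ℝ) (L : ℕ) (π : ℕ → ℕ) : ℝ :=
  ∑ i ∈ Finset.range L, c (π i) (π (i + 1))

/-- The 2-Opt move at `(i, j)`: keep positions `k ≤ i` and `k ≥ j` unchanged,
reverse the subsequence strictly between them. -/
def twoOptMove (σ : ℕ → ℕ) (i j : ℕ) : ℕ → ℕ := fun k =>
  if k ≤ i ∨ j ≤ k then σ k else σ (i + j - k)

/-- Cost of a 2-Opt move: for symmetric `c`, a tour `σ`, and positions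
`0 ≤ i`, `i + 2 ≤ j ≤ 2n + 1`, the tour `τ` obtained by reversing `σ_[i+1,j-1]`
satisfies `cost τ = cost σ + Δ_2opt(i,j)`. -/
theorem stmt_5 (n : ℕ) (hn : 1 ≤ n) (c : ℕ → ℕ → ℝ)
    (hc : ∀ u v, c u v = c v u) (σ : ℕ → ℕ) (hσ : IsTour n σ)
    (i j : ℕ) (hij : i + 2 ≤ j) (hj : j ≤ 2 * n + 1) :
    tourCost c (2 * n + 1) (twoOptMove σ i j) =
      tourCost c (2 * n + 1) σ +
        (c (σ i) (σ (j - 1)) + c (σ (i + 1)) (σ j)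
          - c (σ i) (σ (i + 1)) - c (σ (j - 1)) (σ j)) := by
  set τ := twoOptMove σ i j with hτ
  have hτ_out : ∀ k, k ≤ i ∨ j ≤ k → τ k = σ k := by
    intro k hk; simp only [hτ, twoOptMove, if_pos hk]
  have hτ_mid : ∀ k, i < k → k < j → τ k = σ (i + j - k) := by
    intro k h1 h2
    simp only [hτ, twoOptMove]
    rw [if_neg (by omega)]
  -- split a tour cost into five pieces
  have split : ∀ π : ℕ → ℕ, tourCost c (2 * n + 1) π =
      (∑ k ∈ Finset.Ico 0 i, c (π k) (π (k + 1)))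
      + c (π i) (π (i + 1))
      + (∑ k ∈ Finset.Ico (i + 1) (j - 1), c (π k) (π (k + 1)))
      + c (π (j - 1)) (π j)
      + (∑ k ∈ Finset.Ico j (2 * n + 1), c (π k) (π (k + 1))) := by
    intro π
    rw [tourCost, Finset.range_eq_Ico,
      ← Finset.sum_Ico_consecutive (fun k => c (π k) (π (k + 1)))
        (Nat.zero_le i) (by omega : i ≤ 2 * n + 1),
      ← Finset.sum_Ico_consecutive (fun k => c (π k) (π (k + 1)))
        (by omega : i ≤ i + 1) (by omega : i + 1 ≤ 2 * n + 1),
      ← Finset.sum_Ico_consecutive (fun k => c (π k) (π (k + 1)))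
        (by omega : i + 1 ≤ j - 1) (by omega : j - 1 ≤ 2 * n + 1),
      ← Finset.sum_Ico_consecutive (fun k => c (π k) (π (k + 1)))
        (by omega : j - 1 ≤ j) (by omega : j ≤ 2 * n + 1)]
    have h1 : Finset.Ico i (i + 1) = {i} := by ext k; simp only [Finset.mem_Ico, Finset.mem_singleton]; omega
    have h2 : Finset.Ico (j - 1) j = {j - 1} := by ext k; simp only [Finset.mem_Ico, Finset.mem_singleton]; omega
    rw [h1, h2, Finset.sum_singleton, Finset.sum_singleton,
      show j - 1 + 1 = j by omega]
    ring
  -- the three unchanged / reindexed pieces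
  have low_eq : (∑ k ∈ Finset.Ico 0 i, c (τ k) (τ (k + 1)))
      = ∑ k ∈ Finset.Ico 0 i, c (σ k) (σ (k + 1)) := by
    apply Finset.sum_congr rfl
    intro k hk
    simp only [Finset.mem_Ico] at hk
    rw [hτ_out k (Or.inl (by omega)), hτ_out (k + 1) (Or.inl (by omega))]
  have high_eq : (∑ k ∈ Finset.Ico j (2 * n + 1), c (τ k) (τ (k + 1)))
      = ∑ k ∈ Finset.Ico j (2 * n + 1), c (σ k) (σ (k + 1)) := by
    apply Finset.sum_congr rfl
    intro k hk
    simp only [Finset.mem_Ico] at hk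
    rw [hτ_out k (Or.inr (by omega)), hτ_out (k + 1) (Or.inr (by omega))]
  have mid_eq : (∑ k ∈ Finset.Ico (i + 1) (j - 1), c (τ k) (τ (k + 1)))
      = ∑ k ∈ Finset.Ico (i + 1) (j - 1), c (σ k) (σ (k + 1)) := by
    apply Finset.sum_nbij' (fun k => i + j - 1 - k) (fun k => i + j - 1 - k)
    · intro k hk
      simp only [Finset.mem_Ico] at hk ⊢
      omega
    · intro k hk
      simp only [Finset.mem_Ico] at hk ⊢
      omega
    · intro k hk
      simp only [Finset.mem_Ico] at hk
      omega
    · intro k hk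
      simp only [Finset.mem_Ico] at hk
      omega
    · intro k hk
      simp only [Finset.mem_Ico] at hk
      rw [hτ_mid k (by omega) (by omega), hτ_mid (k + 1) (by omega) (by omega), hc,
        show i + j - (k + 1) = i + j - 1 - k by omega,
        show i + j - 1 - k + 1 = i + j - k by omega]
  have hedge1 : τ i = σ i := hτ_out i (Or.inl le_rfl)
  have hedge2 : τ (i + 1) = σ (j - 1) := by
    rw [hτ_mid (i + 1) (by omega) (by omega)]; congr 1; omega
  have hedge3 : τ (j - 1) = σ (i + 1) := by
    rw [hτ_mid (j - 1) (by omega) (by omega)]; congr 1; omega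
  have hedge4 : τ j = σ j := hτ_out j (Or.inr le_rfl)
  rw [split τ, split σ, low_eq, high_eq, mid_eq, hedge1, hedge2, hedge3, hedge4]
  ring
end

section
/- Let σ be a tour satisfying the precedence constraints, let 0 ≤ i and i+2 ≤ j ≤ 2n+1, and let τ be the tour obtained from σ by the 2-Opt move at (i,j), i.e., τ(k) = σ(k) for k ≤ i or k ≥ j and τ(k) = σ(i+j−k) for i < k < j. Then τ satisfies the precedence constraints if and only if there is no x ∈ {1, …, n} such that both x and n+x belong to visits(σ_[i+1,j−1]). -/
/-- `visits σ i j` is the set of vertices occurring in the subsequence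
`σ_[i,j] = (σ(i), …, σ(j))`. -/
def visits (σ : ℕ → ℕ) (i j : ℕ) : Set ℕ := {v | ∃ k, i ≤ k ∧ k ≤ j ∧ σ k = v}

/-- Feasibility of a 2-Opt move: if `σ` is a tour satisfying the precedence
constraints and `0 ≤ i`, `i + 2 ≤ j ≤ 2n + 1`, then the tour obtained by the 2-Opt
move at `(i,j)` satisfies the precedence constraints if and only if no
pickup-and-delivery pair lies entirely within `σ_[i+1,j-1]`. -/
theorem stmt_6 (n : ℕ) (hn : 1 ≤ n) (σ : ℕ → ℕ)
    (hσ : IsTour n σ) (hprec : SatisfiesPrec n σ)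
    (i j : ℕ) (hij : i + 2 ≤ j) (hj : j ≤ 2 * n + 1) :
    SatisfiesPrec n (twoOptMove σ i j) ↔
      ¬ ∃ x, 1 ≤ x ∧ x ≤ n ∧ x ∈ visits σ (i + 1) (j - 1) ∧
        n + x ∈ visits σ (i + 1) (j - 1) := by
  constructor
  · rintro hτ ⟨x, hx1, hxn, ⟨p, hp1, hp2, hpx⟩, ⟨q, hq1, hq2, hqx⟩⟩
    have hpq : p < q :=
      hprec x p q hx1 hxn (by omega) (by omega) (by omega) (by omega) hpx hqx
    have hτp : twoOptMove σ i j (i + j - p) = x := by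
      unfold twoOptMove
      rw [if_neg (by omega)]
      have h : i + j - (i + j - p) = p := by omega
      rw [h, hpx]
    have hτq : twoOptMove σ i j (i + j - q) = n + x := by
      unfold twoOptMove
      rw [if_neg (by omega)]
      have h : i + j - (i + j - q) = q := by omega
      rw [h, hqx]
    have := hτ x (i + j - p) (i + j - q) hx1 hxn (by omega) (by omega)
      (by omega) (by omega) hτp hτq
    omega
  · intro hno x p q hx1 hxn hp1 hp2 hq1 hq2 hpx hqx
    by_cases hpin : p ≤ i ∨ j ≤ p
    · have hpx' : σ p = x := by
        unfold twoOptMove at hpx; rwa [if_pos hpin] at hpx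
      by_cases hqin : q ≤ i ∨ j ≤ q
      · have hqx' : σ q = n + x := by
          unfold twoOptMove at hqx; rwa [if_pos hqin] at hqx
        exact hprec x p q hx1 hxn hp1 hp2 hq1 hq2 hpx' hqx'
      · have hqx' : σ (i + j - q) = n + x := by
          unfold twoOptMove at hqx; rwa [if_neg hqin] at hqx
        have := hprec x p (i + j - q) hx1 hxn hp1 hp2 (by omega) (by omega) hpx' hqx'
        omega
    · have hpx' : σ (i + j - p) = x := by
        unfold twoOptMove at hpx; rwa [if_neg hpin] at hpx
      by_cases hqin : q ≤ i ∨ j ≤ q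
      · have hqx' : σ q = n + x := by
          unfold twoOptMove at hqx; rwa [if_pos hqin] at hqx
        have := hprec x (i + j - p) q hx1 hxn (by omega) (by omega) hq1 hq2 hpx' hqx'
        omega
      · have hqx' : σ (i + j - q) = n + x := by
          unfold twoOptMove at hqx; rwa [if_neg hqin] at hqx
        exact absurd ⟨x, hx1, hxn,
          ⟨i + j - p, by omega, by omega, hpx'⟩,
          ⟨i + j - q, by omega, by omega, hqx'⟩⟩ hno
end

section
/- Let c be symmetric (c(u,v) = c(v,u) for all vertices u, v), let σ be a tour, and let 0 ≤ i1 < i2 < j1 < j2 ≤ 2n. Let τ be the Type-1 (double-bridge) tour τ = π1 ⊕ π4 ⊕ π3 ⊕ π2 ⊕ π5. Then cost(τ) = cost(σ) + Δ^D(i1,j1) + Δ^D(i2,j2). -/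
/-- `Δ^D(i,j) = c(σ(i),σ(j+1)) + c(σ(i+1),σ(j)) − c(σ(i),σ(i+1)) − c(σ(j),σ(j+1))`. -/
def deltaD (c : ℕ → ℕ → ℝ) (σ : ℕ → ℕ) (i j : ℕ) : ℝ :=
  c (σ i) (σ (j + 1)) + c (σ (i + 1)) (σ j) - c (σ i) (σ (i + 1)) - c (σ j) (σ (j + 1))

/-- `Δ^C(i,j) = c(σ(i),σ(j)) + c(σ(i+1),σ(j+1)) − c(σ(i),σ(i+1)) − c(σ(j),σ(j+1))`. -/
def deltaC (c : ℕ → ℕ → ℝ) (σ : ℕ → ℕ) (i j : ℕ) : ℝ :=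
  c (σ i) (σ j) + c (σ (i + 1)) (σ (j + 1)) - c (σ i) (σ (i + 1)) - c (σ j) (σ (j + 1))

/-- The Type-1 (double-bridge) tour `π1 ⊕ π4 ⊕ π3 ⊕ π2 ⊕ π5`, where
`π1 = σ_[0,i1]`, `π2 = σ_[i1+1,i2]`, `π3 = σ_[i2+1,j1]`, `π4 = σ_[j1+1,j2]`,
`π5 = σ_[j2+1,2n+1]`. -/
def type1Tour (σ : ℕ → ℕ) (i1 i2 j1 j2 : ℕ) : ℕ → ℕ := fun k =>
  if k ≤ i1 then σ k
  else if k ≤ i1 + (j2 - j1) then σ (j1 + (k - i1))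
  else if k ≤ i1 + (j2 - i2) then σ (i2 + (k - (i1 + (j2 - j1))))
  else if k ≤ j2 then σ (i1 + (k - (i1 + (j2 - i2))))
  else σ k

section Aux

lemma shiftSum (F G : ℕ → ℝ) (a a' L : ℕ)
    (h : ∀ t < L, F (a + t) = G (a' + t)) :
    ∑ k ∈ Finset.Ico a (a + L), F k = ∑ k ∈ Finset.Ico a' (a' + L), G k := by
  rw [Finset.sum_Ico_eq_sum_range, Finset.sum_Ico_eq_sum_range]
  simp only [Nat.add_sub_cancel_left]
  exact Finset.sum_congr rfl fun i hi => h i (Finset.mem_range.mp hi)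

lemma splitSum (F : ℕ → ℝ) (a b d : ℕ) (h1 : a ≤ b) (h2 : b ≤ d) :
    ∑ k ∈ Finset.Ico a d, F k = ∑ k ∈ Finset.Ico a b, F k + ∑ k ∈ Finset.Ico b d, F k :=
  (Finset.sum_Ico_consecutive F h1 h2).symm

lemma singleSum (F : ℕ → ℝ) (a : ℕ) : ∑ k ∈ Finset.Ico a (a + 1), F k = F a := by
  simp [Finset.sum_Ico_eq_sum_range]

end Aux


/-- Cost of a Type-1 (double-bridge) 4-Opt move: for symmetric `c`, a tour `σ` and
positions `0 ≤ i1 < i2 < j1 < j2 ≤ 2n`, the tour `τ = π1 ⊕ π4 ⊕ π3 ⊕ π2 ⊕ π5`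
satisfies `cost τ = cost σ + Δ^D(i1,j1) + Δ^D(i2,j2)`. -/
theorem stmt_9 (n : ℕ) (hn : 1 ≤ n) (c : ℕ → ℕ → ℝ)
    (hc : ∀ u v, c u v = c v u) (σ : ℕ → ℕ) (hσ : IsTour n σ)
    (i1 i2 j1 j2 : ℕ) (h12 : i1 < i2) (h2j : i2 < j1) (hjj : j1 < j2)
    (hj2 : j2 ≤ 2 * n) :
    tourCost c (2 * n + 1) (type1Tour σ i1 i2 j1 j2) =
      tourCost c (2 * n + 1) σ + deltaD c σ i1 j1 + deltaD c σ i2 j2 := by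
  set τ := type1Tour σ i1 i2 j1 j2 with hτdef
  set D := j2 - j1 with hD
  set C := j1 - i2 with hC
  set B := i2 - i1 with hB
  have t1 : ∀ k, k ≤ i1 → τ k = σ k := by
    intro k hk; show type1Tour σ i1 i2 j1 j2 k = _
    unfold type1Tour; rw [if_pos hk]
  have t2 : ∀ k, i1 < k → k ≤ i1 + D → τ k = σ (j1 + (k - i1)) := by
    intro k h1 h2; show type1Tour σ i1 i2 j1 j2 k = _
    unfold type1Tour; rw [if_neg (by omega), if_pos (by omega)]
  have t3 : ∀ k, i1 + D < k → k ≤ i1 + D + C → τ k = σ (i2 + (k - (i1 + D))) := by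
    intro k h1 h2; show type1Tour σ i1 i2 j1 j2 k = _
    unfold type1Tour; rw [if_neg (by omega), if_neg (by omega), if_pos (by omega)]
  have t4 : ∀ k, i1 + D + C < k → k ≤ j2 → τ k = σ (i1 + (k - (i1 + D + C))) := by
    intro k h1 h2; show type1Tour σ i1 i2 j1 j2 k = _
    unfold type1Tour
    rw [if_neg (by omega), if_neg (by omega), if_neg (by omega), if_pos (by omega)]
    congr 1; omega
  have t5 : ∀ k, j2 < k → τ k = σ k := by
    intro k h1; show type1Tour σ i1 i2 j1 j2 k = _
    unfold type1Tour
    rw [if_neg (by omega), if_neg (by omega), if_neg (by omega), if_neg (by omega)]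
  set f : ℕ → ℝ := fun k => c (τ k) (τ (k + 1)) with hf
  set g : ℕ → ℝ := fun k => c (σ k) (σ (k + 1)) with hg
  have hDCB : i1 + D + C + B = j2 := by omega
  -- the five segment-sum equalities
  have S1 : ∑ k ∈ Finset.Ico 0 i1, f k = ∑ k ∈ Finset.Ico 0 i1, g k := by
    refine Finset.sum_congr rfl fun k hk => ?_
    have hk' := Finset.mem_Ico.mp hk
    simp only [hf, hg]
    rw [t1 k (by omega), t1 (k+1) (by omega)]
  have S4 : ∑ k ∈ Finset.Ico (i1+1) (i1+1+(D-1)), f k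
      = ∑ k ∈ Finset.Ico (j1+1) (j1+1+(D-1)), g k := by
    refine shiftSum f g _ _ _ fun t ht => ?_
    simp only [hf, hg]
    rw [t2 (i1+1+t) (by omega) (by omega), t2 (i1+1+t+1) (by omega) (by omega)]
    congr 2 <;> omega
  have S3 : ∑ k ∈ Finset.Ico (i1+D+1) (i1+D+1+(C-1)), f k
      = ∑ k ∈ Finset.Ico (i2+1) (i2+1+(C-1)), g k := by
    refine shiftSum f g _ _ _ fun t ht => ?_
    simp only [hf, hg]
    rw [t3 (i1+D+1+t) (by omega) (by omega), t3 (i1+D+1+t+1) (by omega) (by omega)]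
    congr 2 <;> omega
  have S2 : ∑ k ∈ Finset.Ico (i1+D+C+1) (i1+D+C+1+(B-1)), f k
      = ∑ k ∈ Finset.Ico (i1+1) (i1+1+(B-1)), g k := by
    refine shiftSum f g _ _ _ fun t ht => ?_
    simp only [hf, hg]
    rw [t4 (i1+D+C+1+t) (by omega) (by omega), t4 (i1+D+C+1+t+1) (by omega) (by omega)]
    congr 2 <;> omega
  have S5 : ∑ k ∈ Finset.Ico (j2+1) (2*n+1), f k = ∑ k ∈ Finset.Ico (j2+1) (2*n+1), g k := by
    refine Finset.sum_congr rfl fun k hk => ?_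
    have hk' := Finset.mem_Ico.mp hk
    simp only [hf, hg]
    rw [t5 k (by omega), t5 (k+1) (by omega)]
  -- boundary edges
  have E1 : f i1 = c (σ i1) (σ (j1+1)) := by
    simp only [hf]
    rw [t1 i1 le_rfl, t2 (i1+1) (by omega) (by omega)]
    congr 2; omega
  have E2 : f (i1+D) = c (σ j2) (σ (i2+1)) := by
    simp only [hf]
    rw [t2 (i1+D) (by omega) (by omega), t3 (i1+D+1) (by omega) (by omega)]
    congr 2 <;> omega
  have E3 : f (i1+D+C) = c (σ j1) (σ (i1+1)) := by
    simp only [hf]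
    rw [t3 (i1+D+C) (by omega) (by omega), t4 (i1+D+C+1) (by omega) (by omega)]
    congr 2 <;> omega
  have E4 : f j2 = c (σ i2) (σ (j2+1)) := by
    simp only [hf]
    rw [t4 j2 (by omega) le_rfl, t5 (j2+1) (by omega)]
    congr 2; omega
  -- decompositions
  have hτcost : tourCost c (2*n+1) τ
      = (∑ k ∈ Finset.Ico 0 i1, f k) + f i1
        + (∑ k ∈ Finset.Ico (i1+1) (i1+1+(D-1)), f k) + f (i1+D)
        + (∑ k ∈ Finset.Ico (i1+D+1) (i1+D+1+(C-1)), f k) + f (i1+D+C)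
        + (∑ k ∈ Finset.Ico (i1+D+C+1) (i1+D+C+1+(B-1)), f k) + f j2
        + (∑ k ∈ Finset.Ico (j2+1) (2*n+1), f k) := by
    have e1 : i1 + 1 + (D-1) = i1 + D := by omega
    have e2 : i1 + D + 1 + (C-1) = i1 + D + C := by omega
    have e3 : i1 + D + C + 1 + (B-1) = j2 := by omega
    rw [show tourCost c (2*n+1) τ = ∑ k ∈ Finset.Ico 0 (2*n+1), f k by
      rw [tourCost, Finset.range_eq_Ico]]
    rw [splitSum f 0 i1 (2*n+1) (by omega) (by omega),
        splitSum f i1 (i1+1) (2*n+1) (by omega) (by omega),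
        splitSum f (i1+1) (i1+D) (2*n+1) (by omega) (by omega),
        splitSum f (i1+D) (i1+D+1) (2*n+1) (by omega) (by omega),
        splitSum f (i1+D+1) (i1+D+C) (2*n+1) (by omega) (by omega),
        splitSum f (i1+D+C) (i1+D+C+1) (2*n+1) (by omega) (by omega),
        splitSum f (i1+D+C+1) j2 (2*n+1) (by omega) (by omega),
        splitSum f j2 (j2+1) (2*n+1) (by omega) (by omega),
        singleSum f i1, singleSum f (i1+D), singleSum f (i1+D+C), singleSum f j2,
        e1, e2, e3]
    ring
  have hσcost : tourCost c (2*n+1) σ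
      = (∑ k ∈ Finset.Ico 0 i1, g k) + g i1
        + (∑ k ∈ Finset.Ico (i1+1) (i1+1+(B-1)), g k) + g i2
        + (∑ k ∈ Finset.Ico (i2+1) (i2+1+(C-1)), g k) + g j1
        + (∑ k ∈ Finset.Ico (j1+1) (j1+1+(D-1)), g k) + g j2
        + (∑ k ∈ Finset.Ico (j2+1) (2*n+1), g k) := by
    have e1 : i1 + 1 + (B-1) = i2 := by omega
    have e2 : i2 + 1 + (C-1) = j1 := by omega
    have e3 : j1 + 1 + (D-1) = j2 := by omega
    rw [show tourCost c (2*n+1) σ = ∑ k ∈ Finset.Ico 0 (2*n+1), g k by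
      rw [tourCost, Finset.range_eq_Ico]]
    rw [splitSum g 0 i1 (2*n+1) (by omega) (by omega),
        splitSum g i1 (i1+1) (2*n+1) (by omega) (by omega),
        splitSum g (i1+1) i2 (2*n+1) (by omega) (by omega),
        splitSum g i2 (i2+1) (2*n+1) (by omega) (by omega),
        splitSum g (i2+1) j1 (2*n+1) (by omega) (by omega),
        splitSum g j1 (j1+1) (2*n+1) (by omega) (by omega),
        splitSum g (j1+1) j2 (2*n+1) (by omega) (by omega),
        splitSum g j2 (j2+1) (2*n+1) (by omega) (by omega),
        singleSum g i1, singleSum g i2, singleSum g j1, singleSum g j2,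
        e1, e2, e3]
    ring
  rw [hτcost, hσcost, S1, S2, S3, S4, S5, E1, E2, E3, E4]
  simp only [hg, deltaD]
  rw [hc (σ j2) (σ (i2+1)), hc (σ j1) (σ (i1+1))]
  ring
end

section
/- Let c be symmetric (c(u,v) = c(v,u) for all vertices u, v), let σ be a tour, and let 0 ≤ i1 < i2 < j1 < j2 ≤ 2n. Let τ be the Type-2A tour τ = π1 ⊕ r(π3) ⊕ r(π4) ⊕ π2 ⊕ π5. Then cost(τ) = cost(σ) + Δ^C(i1,j1) + Δ^D(i2,j2). -/
/-- The Type-2A tour `π1 ⊕ r(π3) ⊕ r(π4) ⊕ π2 ⊕ π5`, where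
`π1 = σ_[0,i1]`, `π2 = σ_[i1+1,i2]`, `π3 = σ_[i2+1,j1]`, `π4 = σ_[j1+1,j2]`,
`π5 = σ_[j2+1,2n+1]`, and `r(·)` denotes reversal. -/
def type2ATour (σ : ℕ → ℕ) (i1 i2 j1 j2 : ℕ) : ℕ → ℕ := fun k =>
  if k ≤ i1 then σ k
  else if k ≤ i1 + (j1 - i2) then σ (j1 + 1 - (k - i1))
  else if k ≤ i1 + (j2 - i2) then σ (j2 + 1 - (k - (i1 + (j1 - i2))))
  else if k ≤ j2 then σ (i1 + (k - (i1 + (j2 - i2))))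
  else σ k

/-- Cost of a Type-2A 4-Opt move: for symmetric `c`, a tour `σ` and positions
`0 ≤ i1 < i2 < j1 < j2 ≤ 2n`, the tour `τ = π1 ⊕ r(π3) ⊕ r(π4) ⊕ π2 ⊕ π5`
satisfies `cost τ = cost σ + Δ^C(i1,j1) + Δ^D(i2,j2)`. -/
theorem stmt_10 (n : ℕ) (hn : 1 ≤ n) (c : ℕ → ℕ → ℝ)
    (hc : ∀ u v, c u v = c v u) (σ : ℕ → ℕ) (hσ : IsTour n σ)
    (i1 i2 j1 j2 : ℕ) (h12 : i1 < i2) (h2j : i2 < j1) (hjj : j1 < j2)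
    (hj2 : j2 ≤ 2 * n) :
    tourCost c (2 * n + 1) (type2ATour σ i1 i2 j1 j2) =
      tourCost c (2 * n + 1) σ + deltaC c σ i1 j1 + deltaD c σ i2 j2 := by
  set L := 2 * n + 1 with hLdef
  set τ := type2ATour σ i1 i2 j1 j2 with hτ
  set B := i1 + (j1 - i2) with hB
  set C := i1 + (j2 - i2) with hC
  have hAB : i1 < B := by omega
  have hBC : B < C := by omega
  have hCD : C < j2 := by omega
  have hDL : j2 < L := by omega
  -- evaluation lemmas
  have e1 : ∀ k, k ≤ i1 → τ k = σ k := by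
    intro k h; simp [hτ, type2ATour, h]
  have e2 : ∀ k, i1 < k → k ≤ B → τ k = σ (j1 + 1 - (k - i1)) := by
    intro k h h'
    show type2ATour σ i1 i2 j1 j2 k = _
    unfold type2ATour
    rw [if_neg (by omega), if_pos (by omega)]
  have e3 : ∀ k, B < k → k ≤ C → τ k = σ (j2 + 1 - (k - B)) := by
    intro k h h'
    show type2ATour σ i1 i2 j1 j2 k = _
    unfold type2ATour
    rw [if_neg (by omega), if_neg (by omega), if_pos (by omega)]
  have e4 : ∀ k, C < k → k ≤ j2 → τ k = σ (i1 + (k - C)) := by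
    intro k h h'
    show type2ATour σ i1 i2 j1 j2 k = _
    unfold type2ATour
    rw [if_neg (by omega), if_neg (by omega), if_neg (by omega), if_pos (by omega)]
  have e5 : ∀ k, j2 < k → τ k = σ k := by
    intro k h
    show type2ATour σ i1 i2 j1 j2 k = _
    unfold type2ATour
    rw [if_neg (by omega), if_neg (by omega), if_neg (by omega), if_neg (by omega)]
  set f : ℕ → ℝ := fun k => c (τ k) (τ (k + 1)) with hf
  set g : ℕ → ℝ := fun k => c (σ k) (σ (k + 1)) with hg
  -- splitting of the τ side
  have hsplitτ : tourCost c L τ =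
      (∑ k ∈ Finset.Ico 0 i1, f k) + (∑ k ∈ Finset.Ico i1 B, f k)
      + (∑ k ∈ Finset.Ico B C, f k) + (∑ k ∈ Finset.Ico C j2, f k)
      + (∑ k ∈ Finset.Ico j2 L, f k) := by
    rw [tourCost, Finset.range_eq_Ico]
    rw [← Finset.sum_Ico_consecutive f (Nat.zero_le i1) (by omega : i1 ≤ L),
        ← Finset.sum_Ico_consecutive f (by omega : i1 ≤ B) (by omega : B ≤ L),
        ← Finset.sum_Ico_consecutive f (by omega : B ≤ C) (by omega : C ≤ L),
        ← Finset.sum_Ico_consecutive f (by omega : C ≤ j2) (by omega : j2 ≤ L)]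
    ring
  have hsplitσ : tourCost c L σ =
      (∑ k ∈ Finset.Ico 0 i1, g k) + (g i1 + ∑ k ∈ Finset.Ico (i1+1) i2, g k)
      + (g i2 + ∑ k ∈ Finset.Ico (i2+1) j1, g k)
      + (g j1 + ∑ k ∈ Finset.Ico (j1+1) j2, g k)
      + (g j2 + ∑ k ∈ Finset.Ico (j2+1) L, g k) := by
    rw [tourCost, Finset.range_eq_Ico]
    rw [← Finset.sum_Ico_consecutive g (Nat.zero_le i1) (by omega : i1 ≤ L),
        ← Finset.sum_Ico_consecutive g (by omega : i1 ≤ i2) (by omega : i2 ≤ L),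
        ← Finset.sum_Ico_consecutive g (by omega : i2 ≤ j1) (by omega : j1 ≤ L),
        ← Finset.sum_Ico_consecutive g (by omega : j1 ≤ j2) (by omega : j2 ≤ L)]
    rw [Finset.sum_eq_sum_Ico_succ_bot (by omega : i1 < i2) g,
        Finset.sum_eq_sum_Ico_succ_bot (by omega : i2 < j1) g,
        Finset.sum_eq_sum_Ico_succ_bot (by omega : j1 < j2) g,
        Finset.sum_eq_sum_Ico_succ_bot (by omega : j2 < L) g]
    ring
  -- segment 1
  have hT1 : (∑ k ∈ Finset.Ico 0 i1, f k) = ∑ k ∈ Finset.Ico 0 i1, g k := by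
    refine Finset.sum_congr rfl fun k hk => ?_
    simp only [Finset.mem_Ico] at hk
    simp only [hf, hg]
    rw [e1 k (by omega), e1 (k+1) (by omega)]
  -- segment 2
  have hT2 : (∑ k ∈ Finset.Ico i1 B, f k)
      = c (σ i1) (σ j1) + ∑ k ∈ Finset.Ico (i2+1) j1, g k := by
    rw [Finset.sum_eq_sum_Ico_succ_bot hAB f]
    congr 1
    · simp only [hf]
      rw [e1 i1 le_rfl, e2 (i1+1) (by omega) (by omega)]
      congr 2
      omega
    · rw [Finset.sum_Ico_eq_sum_range, Finset.sum_Ico_eq_sum_range]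
      have hlen : B - (i1 + 1) = j1 - (i2 + 1) := by omega
      rw [hlen]
      rw [← Finset.sum_range_reflect (fun k => g (i2 + 1 + k)) (j1 - (i2+1))]
      refine Finset.sum_congr rfl fun t ht => ?_
      simp only [Finset.mem_range] at ht
      simp only [hf, hg]
      rw [e2 (i1 + 1 + t) (by omega) (by omega),
          e2 (i1 + 1 + t + 1) (by omega) (by omega), hc]
      congr 3 <;> omega
  -- segment 3
  have hT3 : (∑ k ∈ Finset.Ico B C, f k)
      = c (σ (i2+1)) (σ j2) + ∑ k ∈ Finset.Ico (j1+1) j2, g k := by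
    rw [Finset.sum_eq_sum_Ico_succ_bot hBC f]
    congr 1
    · simp only [hf]
      rw [e2 B (by omega) le_rfl, e3 (B+1) (by omega) (by omega)]
      congr 2 <;> omega
    · rw [Finset.sum_Ico_eq_sum_range, Finset.sum_Ico_eq_sum_range]
      have hlen : C - (B + 1) = j2 - (j1 + 1) := by omega
      rw [hlen]
      rw [← Finset.sum_range_reflect (fun k => g (j1 + 1 + k)) (j2 - (j1+1))]
      refine Finset.sum_congr rfl fun t ht => ?_
      simp only [Finset.mem_range] at ht
      simp only [hf, hg]
      rw [e3 (B + 1 + t) (by omega) (by omega),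
          e3 (B + 1 + t + 1) (by omega) (by omega), hc]
      congr 3 <;> omega
  -- segment 4
  have hT4 : (∑ k ∈ Finset.Ico C j2, f k)
      = c (σ (j1+1)) (σ (i1+1)) + ∑ k ∈ Finset.Ico (i1+1) i2, g k := by
    rw [Finset.sum_eq_sum_Ico_succ_bot hCD f]
    congr 1
    · simp only [hf]
      rw [e3 C (by omega) le_rfl, e4 (C+1) (by omega) (by omega)]
      congr 2 <;> omega
    · rw [Finset.sum_Ico_eq_sum_range, Finset.sum_Ico_eq_sum_range]
      have hlen : j2 - (C + 1) = i2 - (i1 + 1) := by omega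
      rw [hlen]
      refine Finset.sum_congr rfl fun t ht => ?_
      simp only [Finset.mem_range] at ht
      simp only [hf, hg]
      rw [e4 (C + 1 + t) (by omega) (by omega),
          e4 (C + 1 + t + 1) (by omega) (by omega)]
      have h1 : i1 + (C + 1 + t - C) = i1 + 1 + t := by omega
      have h2 : i1 + (C + 1 + t + 1 - C) = i1 + 1 + t + 1 := by omega
      rw [h1, h2]
  -- segment 5
  have hT5 : (∑ k ∈ Finset.Ico j2 L, f k)
      = c (σ i2) (σ (j2+1)) + ∑ k ∈ Finset.Ico (j2+1) L, g k := by
    rw [Finset.sum_eq_sum_Ico_succ_bot hDL f]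
    congr 1
    · simp only [hf]
      rw [e4 j2 (by omega) le_rfl, e5 (j2+1) (by omega)]
      congr 2
      omega
    · refine Finset.sum_congr rfl fun k hk => ?_
      simp only [Finset.mem_Ico] at hk
      simp only [hf, hg]
      rw [e5 k (by omega), e5 (k+1) (by omega)]
  rw [hsplitτ, hT1, hT2, hT3, hT4, hT5, hsplitσ]
  simp only [deltaC, deltaD, hg]
  rw [hc (σ (j1+1)) (σ (i1+1))]
  ring
end

section
/- Let c be symmetric (c(u,v) = c(v,u) for all vertices u, v), let σ be a tour, and let 0 ≤ i1 < i2 < j1 < j2 ≤ 2n. Let τ be the Type-2B tour τ = π1 ⊕ π4 ⊕ r(π2) ⊕ r(π3) ⊕ π5. Then cost(τ) = cost(σ) + Δ^D(i1,j1) + Δ^C(i2,j2). -/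
/-- The Type-2B tour `π1 ⊕ π4 ⊕ r(π2) ⊕ r(π3) ⊕ π5`, where
`π1 = σ_[0,i1]`, `π2 = σ_[i1+1,i2]`, `π3 = σ_[i2+1,j1]`, `π4 = σ_[j1+1,j2]`,
`π5 = σ_[j2+1,2n+1]`, and `r(·)` denotes reversal. -/
def type2BTour (σ : ℕ → ℕ) (i1 i2 j1 j2 : ℕ) : ℕ → ℕ := fun k =>
  if k ≤ i1 then σ k
  else if k ≤ i1 + (j2 - j1) then σ (j1 + (k - i1))
  else if k ≤ i1 + (j2 - j1) + (i2 - i1) then σ (i2 + 1 - (k - (i1 + (j2 - j1))))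
  else if k ≤ j2 then σ (j1 + 1 - (k - (i1 + (j2 - j1) + (i2 - i1))))
  else σ k

lemma sum_split4 (f : ℕ → ℝ) (a b c d L : ℕ)
    (hab : a < b) (hbc : b < c) (hcd : c < d) (hdL : d < L) :
    ∑ k ∈ Finset.range L, f k =
      (∑ k ∈ Finset.Ico 0 a, f k) + f a + (∑ k ∈ Finset.Ico (a+1) b, f k) + f b
        + (∑ k ∈ Finset.Ico (b+1) c, f k) + f c + (∑ k ∈ Finset.Ico (c+1) d, f k) + f d
        + (∑ k ∈ Finset.Ico (d+1) L, f k) := by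
  have e : ∀ x : ℕ, f x = ∑ k ∈ Finset.Ico x (x+1), f k := by simp
  rw [Finset.range_eq_Ico, e a, e b, e c, e d,
    Finset.sum_Ico_consecutive f (Nat.zero_le a) (by omega : a ≤ a+1),
    Finset.sum_Ico_consecutive f (Nat.zero_le (a+1)) (by omega : a+1 ≤ b),
    Finset.sum_Ico_consecutive f (Nat.zero_le b) (by omega : b ≤ b+1),
    Finset.sum_Ico_consecutive f (Nat.zero_le (b+1)) (by omega : b+1 ≤ c),
    Finset.sum_Ico_consecutive f (Nat.zero_le c) (by omega : c ≤ c+1),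
    Finset.sum_Ico_consecutive f (Nat.zero_le (c+1)) (by omega : c+1 ≤ d),
    Finset.sum_Ico_consecutive f (Nat.zero_le d) (by omega : d ≤ d+1),
    Finset.sum_Ico_consecutive f (Nat.zero_le (d+1)) (by omega : d+1 ≤ L)]

/-- Cost of a Type-2B 4-Opt move: for symmetric `c`, a tour `σ` and positions
`0 ≤ i1 < i2 < j1 < j2 ≤ 2n`, the tour `τ = π1 ⊕ π4 ⊕ r(π2) ⊕ r(π3) ⊕ π5`
satisfies `cost τ = cost σ + Δ^D(i1,j1) + Δ^C(i2,j2)`. -/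
theorem stmt_11 (n : ℕ) (hn : 1 ≤ n) (c : ℕ → ℕ → ℝ)
    (hc : ∀ u v, c u v = c v u) (σ : ℕ → ℕ) (hσ : IsTour n σ)
    (i1 i2 j1 j2 : ℕ) (h12 : i1 < i2) (h2j : i2 < j1) (hjj : j1 < j2)
    (hj2 : j2 ≤ 2 * n) :
    tourCost c (2 * n + 1) (type2BTour σ i1 i2 j1 j2) =
      tourCost c (2 * n + 1) σ + deltaD c σ i1 j1 + deltaC c σ i2 j2 := by
  set τ := type2BTour σ i1 i2 j1 j2 with hτdef
  set A2 := i1 + (j2 - j1) with hA2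
  set A3 := i1 + (j2 - j1) + (i2 - i1) with hA3
  have hτ : ∀ k, τ k = type2BTour σ i1 i2 j1 j2 k := fun _ => rfl
  -- evaluation lemmas
  have t1 : ∀ k, k ≤ i1 → τ k = σ k := by
    intro k hk; rw [hτ]; unfold type2BTour
    split_ifs <;> first | rfl | (exfalso; omega)
  have t2 : ∀ k m, i1 < k → k ≤ A2 → j1 + (k - i1) = m → τ k = σ m := by
    intro k m hk1 hk2 hm; subst hm; rw [hτ]; unfold type2BTour
    split_ifs <;> first | rfl | (exfalso; omega)
  have t3 : ∀ k m, A2 < k → k ≤ A3 → i2 + 1 - (k - A2) = m → τ k = σ m := by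
    intro k m hk1 hk2 hm; subst hm; rw [hτ]; unfold type2BTour
    split_ifs <;> first | rfl | (exfalso; omega)
  have t4 : ∀ k m, A3 < k → k ≤ j2 → j1 + 1 - (k - A3) = m → τ k = σ m := by
    intro k m hk1 hk2 hm; subst hm; rw [hτ]; unfold type2BTour
    split_ifs <;> first | rfl | (exfalso; omega)
  have t5 : ∀ k, j2 < k → τ k = σ k := by
    intro k hk; rw [hτ]; unfold type2BTour
    split_ifs <;> first | rfl | (exfalso; omega)
  have hA2i : i1 < A2 := by omega
  have hA23 : A2 < A3 := by omega
  have hA3j : A3 < j2 := by omega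
  unfold tourCost
  rw [sum_split4 _ i1 A2 A3 j2 (2*n+1) hA2i hA23 hA3j (by omega),
      sum_split4 (fun k => c (σ k) (σ (k+1))) i1 i2 j1 j2 (2*n+1) h12 h2j hjj (by omega)]
  have P1 : ∑ k ∈ Finset.Ico 0 i1, c (τ k) (τ (k+1)) = ∑ k ∈ Finset.Ico 0 i1, c (σ k) (σ (k+1)) := by
    refine Finset.sum_congr rfl fun k hk => ?_
    simp only [Finset.mem_Ico] at hk
    rw [t1 k (by omega), t1 (k+1) (by omega)]
  have E1 : c (τ i1) (τ (i1+1)) = c (σ i1) (σ (j1+1)) := by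
    rw [t1 i1 le_rfl, t2 (i1+1) (j1+1) (by omega) (by omega) (by omega)]
  have P2 : ∑ k ∈ Finset.Ico (i1+1) A2, c (τ k) (τ (k+1))
      = ∑ m ∈ Finset.Ico (j1+1) j2, c (σ m) (σ (m+1)) := by
    refine Finset.sum_nbij' (fun k => k + (j1 - i1)) (fun m => m - (j1 - i1)) ?_ ?_ ?_ ?_ ?_ <;>
      intro k hk <;> simp only [Finset.mem_Ico] at hk ⊢ <;> (try beta_reduce)
    · omega
    · omega
    · omega
    · omega
    · rw [t2 k (k + (j1 - i1)) (by omega) (by omega) (by omega),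
        t2 (k+1) (k + (j1 - i1) + 1) (by omega) (by omega) (by omega)]
  have E2 : c (τ A2) (τ (A2+1)) = c (σ i2) (σ j2) := by
    rw [t2 A2 j2 (by omega) le_rfl (by omega),
        t3 (A2+1) i2 (by omega) (by omega) (by omega), hc]
  have P3 : ∑ k ∈ Finset.Ico (A2+1) A3, c (τ k) (τ (k+1))
      = ∑ m ∈ Finset.Ico (i1+1) i2, c (σ m) (σ (m+1)) := by
    refine Finset.sum_nbij' (fun k => i2 + A2 - k) (fun m => i2 + A2 - m) ?_ ?_ ?_ ?_ ?_ <;>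
      intro k hk <;> simp only [Finset.mem_Ico] at hk ⊢ <;> (try beta_reduce)
    · omega
    · omega
    · omega
    · omega
    · rw [t3 k (i2 + A2 - k + 1) (by omega) (by omega) (by omega),
        t3 (k+1) (i2 + A2 - k) (by omega) (by omega) (by omega), hc]
  have E3 : c (τ A3) (τ (A3+1)) = c (σ (i1+1)) (σ j1) := by
    rw [t3 A3 (i1+1) (by omega) le_rfl (by omega),
        t4 (A3+1) j1 (by omega) (by omega) (by omega)]
  have P4 : ∑ k ∈ Finset.Ico (A3+1) j2, c (τ k) (τ (k+1))
      = ∑ m ∈ Finset.Ico (i2+1) j1, c (σ m) (σ (m+1)) := by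
    refine Finset.sum_nbij' (fun k => j1 + A3 - k) (fun m => j1 + A3 - m) ?_ ?_ ?_ ?_ ?_ <;>
      intro k hk <;> simp only [Finset.mem_Ico] at hk ⊢ <;> (try beta_reduce)
    · omega
    · omega
    · omega
    · omega
    · rw [t4 k (j1 + A3 - k + 1) (by omega) (by omega) (by omega),
        t4 (k+1) (j1 + A3 - k) (by omega) (by omega) (by omega), hc]
  have E4 : c (τ j2) (τ (j2+1)) = c (σ (i2+1)) (σ (j2+1)) := by
    rw [t4 j2 (i2+1) (by omega) le_rfl (by omega), t5 (j2+1) (by omega)]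
  have P5 : ∑ k ∈ Finset.Ico (j2+1) (2*n+1), c (τ k) (τ (k+1))
      = ∑ k ∈ Finset.Ico (j2+1) (2*n+1), c (σ k) (σ (k+1)) := by
    refine Finset.sum_congr rfl fun k hk => ?_
    simp only [Finset.mem_Ico] at hk
    rw [t5 k (by omega), t5 (k+1) (by omega)]
  rw [P1, E1, P2, E2, P3, E3, P4, E4, P5]
  unfold deltaD deltaC
  ring
end

section
/- Let σ be a tour satisfying the precedence constraints and let 0 ≤ i1 < i2 < j1 < j2 ≤ 2n. The Type-1 tour τ = π1 ⊕ π4 ⊕ π3 ⊕ π2 ⊕ π5 satisfies the precedence constraints if and only if (a) there is no x ∈ {1, …, n} with x ∈ visits(π2) ∪ visits(π3) and n+x ∈ visits(π4), and (b) there is no x ∈ {1, …, n} with x ∈ visits(π2) and n+x ∈ visits(π3). -/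
/-- The position in the original tour visited at position `k` of the Type-1 tour. -/
def fpos (i1 i2 j1 j2 k : ℕ) : ℕ :=
  if k ≤ i1 then k
  else if k ≤ i1 + (j2 - j1) then j1 + (k - i1)
  else if k ≤ i1 + (j2 - i2) then i2 + (k - (i1 + (j2 - j1)))
  else if k ≤ j2 then i1 + (k - (i1 + (j2 - i2)))
  else k

lemma type1_eq (σ : ℕ → ℕ) (i1 i2 j1 j2 k : ℕ) :
    type1Tour σ i1 i2 j1 j2 k = σ (fpos i1 i2 j1 j2 k) := by
  unfold type1Tour fpos; split_ifs <;> rfl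

lemma fpos_cases (i1 i2 j1 j2 k : ℕ) :
    (k ≤ i1 ∧ fpos i1 i2 j1 j2 k = k) ∨
    (i1 < k ∧ k ≤ i1 + (j2 - j1) ∧ fpos i1 i2 j1 j2 k = j1 + (k - i1)) ∨
    (i1 + (j2 - j1) < k ∧ k ≤ i1 + (j2 - i2) ∧
      fpos i1 i2 j1 j2 k = i2 + (k - (i1 + (j2 - j1)))) ∨
    (i1 + (j2 - i2) < k ∧ k ≤ j2 ∧
      fpos i1 i2 j1 j2 k = i1 + (k - (i1 + (j2 - i2)))) ∨
    (j2 < k ∧ fpos i1 i2 j1 j2 k = k) := by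
  unfold fpos; split_ifs <;> omega

/-- Feasibility of a Type-1 4-Opt move: the tour `π1 ⊕ π4 ⊕ π3 ⊕ π2 ⊕ π5` satisfies
the precedence constraints iff (a) no pickup of `π2 ∪ π3` has its delivery in `π4`,
and (b) no pickup of `π2` has its delivery in `π3`. -/
theorem stmt_12 (n : ℕ) (hn : 1 ≤ n) (σ : ℕ → ℕ)
    (hσ : IsTour n σ) (hprec : SatisfiesPrec n σ)
    (i1 i2 j1 j2 : ℕ) (h12 : i1 < i2) (h2j : i2 < j1) (hjj : j1 < j2)
    (hj2 : j2 ≤ 2 * n) :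
    SatisfiesPrec n (type1Tour σ i1 i2 j1 j2) ↔
      ((¬ ∃ x, 1 ≤ x ∧ x ≤ n ∧
          x ∈ visits σ (i1 + 1) i2 ∪ visits σ (i2 + 1) j1 ∧
          n + x ∈ visits σ (j1 + 1) j2) ∧
       (¬ ∃ x, 1 ≤ x ∧ x ≤ n ∧
          x ∈ visits σ (i1 + 1) i2 ∧ n + x ∈ visits σ (i2 + 1) j1)) := by
  constructor
  · intro hτ
    constructor
    · rintro ⟨x, hx1, hx2, hx23, q, hq1, hq2, hσq⟩
      have hkq : fpos i1 i2 j1 j2 (i1 + (q - j1)) = q := by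
        unfold fpos; split_ifs <;> omega
      rcases hx23 with ⟨p, hp1, hp2, hσp⟩ | ⟨p, hp1, hp2, hσp⟩
      · have hkp : fpos i1 i2 j1 j2 (p + (j2 - i2)) = p := by
          unfold fpos; split_ifs <;> omega
        have := hτ x (p + (j2 - i2)) (i1 + (q - j1)) hx1 hx2 (by omega) (by omega)
          (by omega) (by omega)
          (by rw [type1_eq, hkp]; exact hσp) (by rw [type1_eq, hkq]; exact hσq)
        omega
      · have hkp : fpos i1 i2 j1 j2 (i1 + (j2 - j1) + (p - i2)) = p := by
          unfold fpos; split_ifs <;> omega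
        have := hτ x (i1 + (j2 - j1) + (p - i2)) (i1 + (q - j1)) hx1 hx2 (by omega)
          (by omega) (by omega) (by omega)
          (by rw [type1_eq, hkp]; exact hσp) (by rw [type1_eq, hkq]; exact hσq)
        omega
    · rintro ⟨x, hx1, hx2, ⟨p, hp1, hp2, hσp⟩, q, hq1, hq2, hσq⟩
      have hkp : fpos i1 i2 j1 j2 (p + (j2 - i2)) = p := by
        unfold fpos; split_ifs <;> omega
      have hkq : fpos i1 i2 j1 j2 (i1 + (j2 - j1) + (q - i2)) = q := by
        unfold fpos; split_ifs <;> omega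
      have := hτ x (p + (j2 - i2)) (i1 + (j2 - j1) + (q - i2)) hx1 hx2 (by omega)
        (by omega) (by omega) (by omega)
        (by rw [type1_eq, hkp]; exact hσp) (by rw [type1_eq, hkq]; exact hσq)
      omega
  · rintro ⟨ha, hb⟩ x i j hx1 hx2 hi1 hi2 hjl hjr hτi hτj
    rw [type1_eq] at hτi hτj
    by_contra hij
    push_neg at hij
    set P := fpos i1 i2 j1 j2 i with hPdef
    set Q := fpos i1 i2 j1 j2 j with hQdef
    have hci := fpos_cases i1 i2 j1 j2 i
    have hcj := fpos_cases i1 i2 j1 j2 j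
    rw [← hPdef] at hci
    rw [← hQdef] at hcj
    have hpq : P < Q := hprec x P Q hx1 hx2 (by omega) (by omega) (by omega) (by omega)
      hτi hτj
    rcases hci with ⟨h1, hP⟩ | ⟨h1, h2, hP⟩ | ⟨h1, h2, hP⟩ | ⟨h1, h2, hP⟩ | ⟨h1, hP⟩ <;>
      rcases hcj with ⟨g1, hQ⟩ | ⟨g1, g2, hQ⟩ | ⟨g1, g2, hQ⟩ | ⟨g1, g2, hQ⟩ | ⟨g1, hQ⟩
    all_goals try omega
    · exact ha ⟨x, hx1, hx2, Or.inr ⟨P, by omega, by omega, hτi⟩,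
        ⟨Q, by omega, by omega, hτj⟩⟩
    · exact ha ⟨x, hx1, hx2, Or.inl ⟨P, by omega, by omega, hτi⟩,
        ⟨Q, by omega, by omega, hτj⟩⟩
    · exact hb ⟨x, hx1, hx2, ⟨P, by omega, by omega, hτi⟩,
        ⟨Q, by omega, by omega, hτj⟩⟩
end

section
/- Let σ be a tour satisfying the precedence constraints and let 0 ≤ i1 < i2 < j1 < j2 ≤ 2n. The Type-2A tour τ = π1 ⊕ r(π3) ⊕ r(π4) ⊕ π2 ⊕ π5 satisfies the precedence constraints if and only if (a) there is no x ∈ {1, …, n} with both x and n+x in visits(π3), (b) there is no x ∈ {1, …, n} with both x and n+x in visits(π4), and (c) there is no x ∈ {1, …, n} with x ∈ visits(π2) and n+x ∈ visits(π3) ∪ visits(π4). -/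
/-- New position of the vertex originally at position `m`. -/
def newposF (i1 i2 j1 j2 : ℕ) : ℕ → ℕ := fun m =>
  if m ≤ i1 then m
  else if m ≤ i2 then i1 + (j2 - i2) + (m - i1)
  else if m ≤ j1 then i1 + (j1 + 1 - m)
  else if m ≤ j2 then i1 + (j1 - i2) + (j2 + 1 - m)
  else m

/-- Original position of the vertex sitting at position `k` of the new tour. -/
def oldposF (i1 i2 j1 j2 : ℕ) : ℕ → ℕ := fun k =>
  if k ≤ i1 then k
  else if k ≤ i1 + (j1 - i2) then j1 + 1 - (k - i1)
  else if k ≤ i1 + (j2 - i2) then j2 + 1 - (k - (i1 + (j1 - i2)))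
  else if k ≤ j2 then i1 + (k - (i1 + (j2 - i2)))
  else k

lemma eval_old (σ : ℕ → ℕ) (i1 i2 j1 j2 k : ℕ) :
    type2ATour σ i1 i2 j1 j2 k = σ (oldposF i1 i2 j1 j2 k) := by
  unfold type2ATour oldposF
  split_ifs <;> rfl

lemma eval_new (σ : ℕ → ℕ) (i1 i2 j1 j2 : ℕ) (h12 : i1 < i2) (h2j : i2 < j1)
    (hjj : j1 < j2) (m : ℕ) :
    type2ATour σ i1 i2 j1 j2 (newposF i1 i2 j1 j2 m) = σ m := by
  unfold type2ATour newposF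
  split_ifs <;> congr 1 <;> omega

lemma N_O (i1 i2 j1 j2 : ℕ) (h12 : i1 < i2) (h2j : i2 < j1) (hjj : j1 < j2) (k : ℕ) :
    newposF i1 i2 j1 j2 (oldposF i1 i2 j1 j2 k) = k := by
  unfold newposF oldposF
  split_ifs <;> omega

lemma N_bounds (n i1 i2 j1 j2 : ℕ) (h12 : i1 < i2) (h2j : i2 < j1) (hjj : j1 < j2)
    (hj2 : j2 ≤ 2 * n) (m : ℕ) (hm1 : 1 ≤ m) (hm2 : m ≤ 2 * n) :
    1 ≤ newposF i1 i2 j1 j2 m ∧ newposF i1 i2 j1 j2 m ≤ 2 * n := by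
  unfold newposF
  split_ifs <;> omega

lemma O_bounds (n i1 i2 j1 j2 : ℕ) (h12 : i1 < i2) (h2j : i2 < j1) (hjj : j1 < j2)
    (hj2 : j2 ≤ 2 * n) (k : ℕ) (hk1 : 1 ≤ k) (hk2 : k ≤ 2 * n) :
    1 ≤ oldposF i1 i2 j1 j2 k ∧ oldposF i1 i2 j1 j2 k ≤ 2 * n := by
  unfold oldposF
  split_ifs <;> omega

lemma key_lt (i1 i2 j1 j2 : ℕ) (h12 : i1 < i2) (h2j : i2 < j1) (hjj : j1 < j2)
    (a b : ℕ) (hab : a < b) :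
    newposF i1 i2 j1 j2 a < newposF i1 i2 j1 j2 b ↔
      ¬ ((i2 + 1 ≤ a ∧ a ≤ j1 ∧ i2 + 1 ≤ b ∧ b ≤ j1) ∨
         (j1 + 1 ≤ a ∧ a ≤ j2 ∧ j1 + 1 ≤ b ∧ b ≤ j2) ∨
         (i1 + 1 ≤ a ∧ a ≤ i2 ∧ i2 + 1 ≤ b ∧ b ≤ j2)) := by
  unfold newposF
  split_ifs <;> omega

/-- Feasibility of a Type-2A 4-Opt move: the tour `π1 ⊕ r(π3) ⊕ r(π4) ⊕ π2 ⊕ π5`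
satisfies the precedence constraints iff (a) `π3` contains no complete
pickup-and-delivery pair, (b) `π4` contains no complete pair, and (c) no pickup
of `π2` has its delivery in `π3 ∪ π4`. -/
theorem stmt_13 (n : ℕ) (hn : 1 ≤ n) (σ : ℕ → ℕ)
    (hσ : IsTour n σ) (hprec : SatisfiesPrec n σ)
    (i1 i2 j1 j2 : ℕ) (h12 : i1 < i2) (h2j : i2 < j1) (hjj : j1 < j2)
    (hj2 : j2 ≤ 2 * n) :
    SatisfiesPrec n (type2ATour σ i1 i2 j1 j2) ↔
      ((¬ ∃ x, 1 ≤ x ∧ x ≤ n ∧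
          x ∈ visits σ (i2 + 1) j1 ∧ n + x ∈ visits σ (i2 + 1) j1) ∧
       (¬ ∃ x, 1 ≤ x ∧ x ≤ n ∧
          x ∈ visits σ (j1 + 1) j2 ∧ n + x ∈ visits σ (j1 + 1) j2) ∧
       (¬ ∃ x, 1 ≤ x ∧ x ≤ n ∧
          x ∈ visits σ (i1 + 1) i2 ∧
          n + x ∈ visits σ (i2 + 1) j1 ∪ visits σ (j1 + 1) j2)) := by
  constructor
  · intro hτ
    refine ⟨?_, ?_, ?_⟩
    · rintro ⟨x, hx1, hxn, ⟨a, ha1, ha2, hσa⟩, ⟨b, hb1, hb2, hσb⟩⟩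
      have hab : a < b :=
        hprec x a b hx1 hxn (by omega) (by omega) (by omega) (by omega) hσa hσb
      have h1 : type2ATour σ i1 i2 j1 j2 (newposF i1 i2 j1 j2 a) = x := by
        rw [eval_new σ i1 i2 j1 j2 h12 h2j hjj a, hσa]
      have h2 : type2ATour σ i1 i2 j1 j2 (newposF i1 i2 j1 j2 b) = n + x := by
        rw [eval_new σ i1 i2 j1 j2 h12 h2j hjj b, hσb]
      have hBa := N_bounds n i1 i2 j1 j2 h12 h2j hjj hj2 a (by omega) (by omega)
      have hBb := N_bounds n i1 i2 j1 j2 h12 h2j hjj hj2 b (by omega) (by omega)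
      have hlt := hτ x _ _ hx1 hxn hBa.1 hBa.2 hBb.1 hBb.2 h1 h2
      exact ((key_lt i1 i2 j1 j2 h12 h2j hjj a b hab).mp hlt)
        (Or.inl ⟨ha1, ha2, hb1, hb2⟩)
    · rintro ⟨x, hx1, hxn, ⟨a, ha1, ha2, hσa⟩, ⟨b, hb1, hb2, hσb⟩⟩
      have hab : a < b :=
        hprec x a b hx1 hxn (by omega) (by omega) (by omega) (by omega) hσa hσb
      have h1 : type2ATour σ i1 i2 j1 j2 (newposF i1 i2 j1 j2 a) = x := by
        rw [eval_new σ i1 i2 j1 j2 h12 h2j hjj a, hσa]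
      have h2 : type2ATour σ i1 i2 j1 j2 (newposF i1 i2 j1 j2 b) = n + x := by
        rw [eval_new σ i1 i2 j1 j2 h12 h2j hjj b, hσb]
      have hBa := N_bounds n i1 i2 j1 j2 h12 h2j hjj hj2 a (by omega) (by omega)
      have hBb := N_bounds n i1 i2 j1 j2 h12 h2j hjj hj2 b (by omega) (by omega)
      have hlt := hτ x _ _ hx1 hxn hBa.1 hBa.2 hBb.1 hBb.2 h1 h2
      exact ((key_lt i1 i2 j1 j2 h12 h2j hjj a b hab).mp hlt)
        (Or.inr (Or.inl ⟨ha1, ha2, hb1, hb2⟩))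
    · rintro ⟨x, hx1, hxn, ⟨a, ha1, ha2, hσa⟩, hb⟩
      obtain ⟨b, hb1, hb2, hσb⟩ :
          ∃ b, i2 + 1 ≤ b ∧ b ≤ j2 ∧ σ b = n + x := by
        rcases hb with ⟨b, hb1, hb2, hσb⟩ | ⟨b, hb1, hb2, hσb⟩
        · exact ⟨b, hb1, by omega, hσb⟩
        · exact ⟨b, by omega, hb2, hσb⟩
      have hab : a < b :=
        hprec x a b hx1 hxn (by omega) (by omega) (by omega) (by omega) hσa hσb
      have h1 : type2ATour σ i1 i2 j1 j2 (newposF i1 i2 j1 j2 a) = x := by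
        rw [eval_new σ i1 i2 j1 j2 h12 h2j hjj a, hσa]
      have h2 : type2ATour σ i1 i2 j1 j2 (newposF i1 i2 j1 j2 b) = n + x := by
        rw [eval_new σ i1 i2 j1 j2 h12 h2j hjj b, hσb]
      have hBa := N_bounds n i1 i2 j1 j2 h12 h2j hjj hj2 a (by omega) (by omega)
      have hBb := N_bounds n i1 i2 j1 j2 h12 h2j hjj hj2 b (by omega) (by omega)
      have hlt := hτ x _ _ hx1 hxn hBa.1 hBa.2 hBb.1 hBb.2 h1 h2
      exact ((key_lt i1 i2 j1 j2 h12 h2j hjj a b hab).mp hlt)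
        (Or.inr (Or.inr ⟨ha1, ha2, hb1, hb2⟩))
  · rintro ⟨ca, cb, cc⟩ x i j hx1 hxn hi1 hi2n hj1' hj2n hτi hτj
    set a := oldposF i1 i2 j1 j2 i with hadef
    set b := oldposF i1 i2 j1 j2 j with hbdef
    have hBa := O_bounds n i1 i2 j1 j2 h12 h2j hjj hj2 i hi1 hi2n
    have hBb := O_bounds n i1 i2 j1 j2 h12 h2j hjj hj2 j hj1' hj2n
    have hσa : σ a = x := (eval_old σ i1 i2 j1 j2 i).symm.trans hτi
    have hσb : σ b = n + x := (eval_old σ i1 i2 j1 j2 j).symm.trans hτj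
    have hab : a < b := hprec x a b hx1 hxn hBa.1 hBa.2 hBb.1 hBb.2 hσa hσb
    have hi' : newposF i1 i2 j1 j2 a = i := N_O i1 i2 j1 j2 h12 h2j hjj i
    have hj'' : newposF i1 i2 j1 j2 b = j := N_O i1 i2 j1 j2 h12 h2j hjj j
    rw [← hi', ← hj'', key_lt i1 i2 j1 j2 h12 h2j hjj a b hab]
    rintro (⟨h₁, h₂, h₃, h₄⟩ | ⟨h₁, h₂, h₃, h₄⟩ | ⟨h₁, h₂, h₃, h₄⟩)
    · exact ca ⟨x, hx1, hxn, ⟨a, h₁, h₂, hσa⟩, ⟨b, h₃, h₄, hσb⟩⟩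
    · exact cb ⟨x, hx1, hxn, ⟨a, h₁, h₂, hσa⟩, ⟨b, h₃, h₄, hσb⟩⟩
    · refine cc ⟨x, hx1, hxn, ⟨a, h₁, h₂, hσa⟩, ?_⟩
      by_cases hbj : b ≤ j1
      · exact Or.inl ⟨b, h₃, hbj, hσb⟩
      · exact Or.inr ⟨b, by omega, h₄, hσb⟩
end

section
/- Let N ≥ 3 be a natural number and Δ : ℕ × ℕ → ℝ. Define Φ_sub on pairs (i2, j1) with 1 ≤ i2 < j1 ≤ N−1 by Φ_sub[1, j1] = Δ(0, j1) and Φ_sub[i2, j1] = min(Φ_sub[i2−1, j1], Δ(i2−1, j1)) for i2 ≥ 2; define Φ on pairs (i2, j2) with 1 ≤ i2 and i2 + 2 ≤ j2 ≤ N by Φ[i2, i2+2] = Φ_sub[i2, i2+1] and Φ[i2, j2] = min(Φ[i2, j2−1], Φ_sub[i2, j2−1]) for j2 > i2 + 2. Then (1) Φ_sub[i2, j1] = min_{0 ≤ i1 < i2} Δ(i1, j1) for all such pairs, and (2) Φ[i2, j2] = min over all pairs (i1, j1) with 0 ≤ i1 < i2 < j1 < j2 of Δ(i1, j1). -/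
/-- Correctness of the 4-Opt preprocessing recursions (Equations (22) and (23)):
`Φ_sub[i2, j1]` computes the minimum of `Δ(i1, j1)` over `0 ≤ i1 < i2`, and
`Φ[i2, j2]` computes the minimum of `Δ(i1, j1)` over all `0 ≤ i1 < i2 < j1 < j2`. -/
theorem stmt_15 (N : ℕ) (hN : 3 ≤ N) (Δ : ℕ → ℕ → ℝ) (Φsub Φ : ℕ → ℕ → ℝ)
    (hsub_base : ∀ j1, 1 < j1 → j1 ≤ N - 1 → Φsub 1 j1 = Δ 0 j1)
    (hsub_step : ∀ i2 j1, 2 ≤ i2 → i2 < j1 → j1 ≤ N - 1 →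
      Φsub i2 j1 = min (Φsub (i2 - 1) j1) (Δ (i2 - 1) j1))
    (hΦ_base : ∀ i2, 1 ≤ i2 → i2 + 2 ≤ N → Φ i2 (i2 + 2) = Φsub i2 (i2 + 1))
    (hΦ_step : ∀ i2 j2, 1 ≤ i2 → i2 + 2 < j2 → j2 ≤ N →
      Φ i2 j2 = min (Φ i2 (j2 - 1)) (Φsub i2 (j2 - 1))) :
    (∀ i2 j1, 1 ≤ i2 → i2 < j1 → j1 ≤ N - 1 →
      Φsub i2 j1 = sInf {r : ℝ | ∃ i1, i1 < i2 ∧ r = Δ i1 j1}) ∧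
    (∀ i2 j2, 1 ≤ i2 → i2 + 2 ≤ j2 → j2 ≤ N →
      Φ i2 j2 =
        sInf {r : ℝ | ∃ i1 j1, i1 < i2 ∧ i2 < j1 ∧ j1 < j2 ∧ r = Δ i1 j1}) := by
  -- finiteness of the Φsub sets
  have hfin1 : ∀ (n j1 : ℕ), ({r : ℝ | ∃ i1, i1 < n ∧ r = Δ i1 j1}).Finite := by
    intro n j1
    have : {r : ℝ | ∃ i1, i1 < n ∧ r = Δ i1 j1} = (fun i1 => Δ i1 j1) '' Set.Iio n := by
      ext r; simp [eq_comm]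
    rw [this]; exact (Set.finite_Iio n).image _
  have hfin2 : ∀ (i2 j2 : ℕ),
      ({r : ℝ | ∃ i1 j1, i1 < i2 ∧ i2 < j1 ∧ j1 < j2 ∧ r = Δ i1 j1}).Finite := by
    intro i2 j2
    have : {r : ℝ | ∃ i1 j1, i1 < i2 ∧ i2 < j1 ∧ j1 < j2 ∧ r = Δ i1 j1}
        ⊆ (fun p : ℕ × ℕ => Δ p.1 p.2) '' (Set.Iio i2 ×ˢ Set.Iio j2) := by
      rintro r ⟨i1, j1, h1, h2, h3, rfl⟩
      exact ⟨(i1, j1), ⟨h1, h3⟩, rfl⟩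
    exact Set.Finite.subset (((Set.finite_Iio i2).prod (Set.finite_Iio j2)).image _) this
  have part1 : ∀ i2 j1, 1 ≤ i2 → i2 < j1 → j1 ≤ N - 1 →
      Φsub i2 j1 = sInf {r : ℝ | ∃ i1, i1 < i2 ∧ r = Δ i1 j1} := by
    intro i2 j1 h1
    induction i2, h1 using Nat.le_induction with
    | base =>
      intro h2 h3
      rw [hsub_base j1 h2 h3]
      have hs : {r : ℝ | ∃ i1, i1 < 1 ∧ r = Δ i1 j1} = {Δ 0 j1} := by
        ext r; simp [Nat.lt_one_iff]
      rw [hs, csInf_singleton]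
    | succ n hn ih =>
      intro h2 h3
      have h2' : n < j1 := by omega
      rw [hsub_step (n + 1) j1 (by omega) h2 h3]
      simp only [Nat.add_sub_cancel]
      rw [ih h2' h3]
      have hs : {r : ℝ | ∃ i1, i1 < n + 1 ∧ r = Δ i1 j1}
          = insert (Δ n j1) {r : ℝ | ∃ i1, i1 < n ∧ r = Δ i1 j1} := by
        ext r
        simp only [Set.mem_setOf_eq, Set.mem_insert_iff]
        constructor
        · rintro ⟨i1, hi, rfl⟩
          rcases Nat.lt_succ_iff_lt_or_eq.mp hi with h | rfl
          · exact Or.inr ⟨i1, h, rfl⟩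
          · exact Or.inl rfl
        · rintro (rfl | ⟨i1, hi, rfl⟩)
          · exact ⟨n, by omega, rfl⟩
          · exact ⟨i1, by omega, rfl⟩
      rw [hs, csInf_insert ((hfin1 n j1).bddBelow) ⟨Δ 0 j1, 0, by omega, rfl⟩]
      rw [min_comm]
  refine ⟨part1, ?_⟩
  intro i2 j2 h1 h2
  induction j2, h2 using Nat.le_induction with
  | base =>
    intro h3
    have hs : {r : ℝ | ∃ i1 j1, i1 < i2 ∧ i2 < j1 ∧ j1 < i2 + 2 ∧ r = Δ i1 j1}
        = {r : ℝ | ∃ i1, i1 < i2 ∧ r = Δ i1 (i2 + 1)} := by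
      ext r
      simp only [Set.mem_setOf_eq]
      constructor
      · rintro ⟨i1, j1, hi, hj1, hj2, rfl⟩
        have : j1 = i2 + 1 := by omega
        subst this
        exact ⟨i1, hi, rfl⟩
      · rintro ⟨i1, hi, rfl⟩
        exact ⟨i1, i2 + 1, hi, by omega, by omega, rfl⟩
    rw [hs, hΦ_base i2 h1 h3, part1 i2 (i2 + 1) h1 (by omega) (by omega)]
  | succ m hm ih =>
    intro h3
    rw [hΦ_step i2 (m + 1) h1 (by omega) h3]
    simp only [Nat.add_sub_cancel]
    rw [ih (by omega), part1 i2 m h1 (by omega) (by omega)]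
    have hs : {r : ℝ | ∃ i1 j1, i1 < i2 ∧ i2 < j1 ∧ j1 < m + 1 ∧ r = Δ i1 j1}
        = {r : ℝ | ∃ i1 j1, i1 < i2 ∧ i2 < j1 ∧ j1 < m ∧ r = Δ i1 j1}
          ∪ {r : ℝ | ∃ i1, i1 < i2 ∧ r = Δ i1 m} := by
      ext r
      simp only [Set.mem_setOf_eq, Set.mem_union]
      constructor
      · rintro ⟨i1, j1, hi, hj1, hj2, rfl⟩
        rcases Nat.lt_succ_iff_lt_or_eq.mp hj2 with h | rfl
        · exact Or.inl ⟨i1, j1, hi, hj1, h, rfl⟩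
        · exact Or.inr ⟨i1, hi, rfl⟩
      · rintro (⟨i1, j1, hi, hj1, hj2, rfl⟩ | ⟨i1, hi, rfl⟩)
        · exact ⟨i1, j1, hi, hj1, by omega, rfl⟩
        · exact ⟨i1, m, hi, by omega, by omega, rfl⟩
    rw [hs, csInf_union ((hfin2 i2 m).bddBelow)
      ⟨Δ 0 (i2 + 1), 0, i2 + 1, by omega, by omega, by omega, rfl⟩
      ((hfin1 i2 m).bddBelow) ⟨Δ 0 m, 0, by omega, rfl⟩]
end

section
/- Let σ be a tour and let 1 ≤ i < j ≤ 2n. Let τ = (τ(0), …, τ(j−i)) be any sequence in which each vertex of visits(σ_[i,j]) occurs exactly once, with first entry τ(0) = σ(j) and last entry τ(j−i) = σ(i). If n + σ(i) ∈ visits(σ_[i+1,j]), or if σ(j) > n and σ(j) − n ∈ visits(σ_[i,j−1]), then τ contains an internal precedence violation: there exists x ∈ {1, …, n} such that both x and n+x occur in τ and n+x occurs at an earlier position of τ than x. -/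
/-- Infeasibility case of the `R(i,j)` recursion of the 2k-Opt dynamic program:
let `τ = (τ(0), …, τ(j−i))` be any sequence in which each vertex of
`visits(σ_[i,j])` occurs exactly once, with `τ(0) = σ(j)` and `τ(j−i) = σ(i)`.
If `n + σ(i) ∈ visits(σ_[i+1,j])`, or `σ(j) > n` and
`σ(j) − n ∈ visits(σ_[i,j−1])`, then `τ` contains an internal precedence
violation: some delivery `n + x` occurs in `τ` at an earlier position than its
pickup `x`. -/
theorem stmt_16 (n : ℕ) (hn : 1 ≤ n) (σ : ℕ → ℕ) (hσ : IsTour n σ)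
    (i j : ℕ) (hi : 1 ≤ i) (hij : i < j) (hj : j ≤ 2 * n)
    (τ : ℕ → ℕ) (hbij : Set.BijOn τ {k | k ≤ j - i} (visits σ i j))
    (hτ0 : τ 0 = σ j) (hτlast : τ (j - i) = σ i)
    (hyp : n + σ i ∈ visits σ (i + 1) j ∨
           (n < σ j ∧ σ j - n ∈ visits σ i (j - 1))) :
    ∃ x, 1 ≤ x ∧ x ≤ n ∧
      ∃ p q, p < q ∧ q ≤ j - i ∧ τ p = n + x ∧ τ q = x := by
  obtain ⟨h0, hlast, hbijσ⟩ := hσ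
  have hmap : ∀ k, i ≤ k → k ≤ j → σ k ∈ Set.Icc 1 (2*n) := fun k hk1 hk2 =>
    hbijσ.mapsTo ⟨le_trans hi hk1, le_trans hk2 hj⟩
  rcases hyp with ⟨k, hk1, hk2, hk3⟩ | ⟨hgt, k, hk1, hk2, hk3⟩
  · set x := σ i with hx
    have hxI := hmap i le_rfl hij.le
    have hnx : n + x ∈ visits σ i j := ⟨k, by omega, hk2, hk3⟩
    obtain ⟨q, hq, hτq⟩ := hbij.surjOn hnx
    have hq' : q ≤ j - i := hq
    have hnxI := hmap k (by omega) hk2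
    rw [hk3] at hnxI
    simp only [Set.mem_Icc] at hxI hnxI
    have hqlt : q < j - i := by
      rcases lt_or_eq_of_le hq' with h | h
      · exact h
      · exfalso; rw [h, hτlast] at hτq; omega
    exact ⟨x, hxI.1, by omega, q, j - i, hqlt, le_rfl, hτq, hτlast⟩
  · set x := σ j - n with hx
    have hjI := hmap j hij.le le_rfl
    simp only [Set.mem_Icc] at hjI
    have hxmem : x ∈ visits σ i j := ⟨k, hk1, by omega, hk3⟩
    obtain ⟨q, hq, hτq⟩ := hbij.surjOn hxmem
    have hq' : q ≤ j - i := hq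
    have hq0 : 0 < q := by
      rcases Nat.eq_zero_or_pos q with h | h
      · exfalso; rw [h, hτ0] at hτq; omega
      · exact h
    exact ⟨x, by omega, by omega, 0, q, hq0, hq', by rw [hτ0]; omega, hτq⟩
end
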